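/- arXiv:1505.07693 — 7 statements merged into one kernel-verified Lean document; each statement's English description precedes it below -/
import Mathlib

section
/- Range-conditioned local reflection coefficient R21: under the two-layer range-conditioning hypotheses, assume Ĵφ11 is invertible and D̂_B := Ĥ_z21 − Ĵ_z11·Ĵφ11⁻¹·Ĥφ21 is invertible, and set D_B := H_z21 − J_z11·Jφ11⁻¹·Hφ21. Then D_B is invertible and R21 := D_B⁻¹ · (J_z11·Jφ11⁻¹·Jφ21 − J_z21) satisfies R21 = β̄21 · R̂21 · β̄21, where R̂21 := D̂_B⁻¹ · (Ĵ_z11·Ĵφ11⁻¹·Ĵφ21 − Ĵ_z21). -/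
/-!
The scalings by `β̄11` cancel in `J_z11 · Jφ11⁻¹ = Ĵ_z11 · Ĵφ11⁻¹`, so every physical quantity of
layer 21 is its hatted counterpart multiplied on the right by `ā21` or `β̄21`: `D_B = D̂_B · ā21`
and the numerator of `R21` is that of `R̂21` times `β̄21`. Inverting `D_B` turns `ā21` into `β̄21`.
-/

open Matrix

namespace Matrix

variable {n R : Type*} [Fintype n] [DecidableEq n] [CommRing R]

theorem mul_mul_inv_mul_cancel_right (A B C : Matrix n n R) (hC : IsUnit C) :
    A * C * (B * C)⁻¹ = A * B⁻¹ := by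
  rw [mul_inv_rev, ← Matrix.mul_assoc,
    mul_nonsing_inv_cancel_right _ _ ((isUnit_iff_isUnit_det C).mp hC)]

theorem mul_inv_mul_mul_of_mul_eq_one (D N a b : Matrix n n R) (hab : a * b = 1) :
    (D * a)⁻¹ * (N * b) = b * (D⁻¹ * N) * b := by
  rw [mul_inv_rev, inv_eq_right_inv hab]
  simp only [Matrix.mul_assoc]

end Matrix

theorem R21_factorization_general
    (aB11 bB11 aB21 bB21 : Matrix (Fin 2) (Fin 2) ℂ)
    (hab11 : aB11 * bB11 = 1) (hab21 : aB21 * bB21 = 1)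
    (hatJz11 hatJz21 hatHz21 : Matrix (Fin 2) (Fin 2) ℂ)
    (hatJphi11 hatJphi21 hatHphi21 : Matrix (Fin 2) (Fin 2) ℂ)
    (Jz11 Jz21 Hz21 Jphi11 Jphi21 Hphi21 : Matrix (Fin 2) (Fin 2) ℂ)
    (eJz11 : Jz11 = hatJz11 * bB11)
    (eJz21 : Jz21 = hatJz21 * bB21) (eHz21 : Hz21 = hatHz21 * aB21)
    (eJphi11 : Jphi11 = hatJphi11 * bB11)
    (eJphi21 : Jphi21 = hatJphi21 * bB21) (eHphi21 : Hphi21 = hatHphi21 * aB21)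
    (hatDB DB R21 hatR21 : Matrix (Fin 2) (Fin 2) ℂ)
    (ehatDB : hatDB = hatHz21 - hatJz11 * hatJphi11⁻¹ * hatHphi21)
    (hDBU : IsUnit hatDB)
    (eDB : DB = Hz21 - Jz11 * Jphi11⁻¹ * Hphi21)
    (eR21 : R21 = DB⁻¹ * (Jz11 * Jphi11⁻¹ * Jphi21 - Jz21))
    (ehatR21 : hatR21 = hatDB⁻¹ * (hatJz11 * hatJphi11⁻¹ * hatJphi21 - hatJz21)) :
    IsUnit DB ∧ R21 = bB21 * hatR21 * bB21 := by
  have hJ : Jz11 * Jphi11⁻¹ = hatJz11 * hatJphi11⁻¹ := by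
    rw [eJz11, eJphi11, mul_mul_inv_mul_cancel_right _ _ _ (.of_mul_eq_one_right aB11 hab11)]
  have hDB : DB = hatDB * aB21 := by
    rw [eDB, eHz21, eHphi21, ehatDB, hJ, sub_mul, Matrix.mul_assoc (hatJz11 * hatJphi11⁻¹)]
  have hnum : Jz11 * Jphi11⁻¹ * Jphi21 - Jz21
      = (hatJz11 * hatJphi11⁻¹ * hatJphi21 - hatJz21) * bB21 := by
    rw [hJ, eJphi21, eJz21, sub_mul, Matrix.mul_assoc (hatJz11 * hatJphi11⁻¹)]
  refine ⟨hDB ▸ hDBU.mul (.of_mul_eq_one bB21 hab21), ?_⟩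
  rw [eR21, hDB, hnum, ehatR21, mul_inv_mul_mul_of_mul_eq_one _ _ _ _ hab21]

/-- Range-conditioned local reflection coefficient `R21 = β̄21 · R̂21 · β̄21`. -/
theorem R21_factorization
    (aB11 bB11 aB21 bB21 : Matrix (Fin 2) (Fin 2) ℂ)
    (haB11 : aB11.IsDiag) (hbB11 : bB11.IsDiag) (haB21 : aB21.IsDiag) (hbB21 : bB21.IsDiag)
    (hab11 : aB11 * bB11 = 1) (hab21 : aB21 * bB21 = 1)
    (hatJz11 hatHz11 hatJz21 hatHz21 : Matrix (Fin 2) (Fin 2) ℂ)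
    (hdJz11 : hatJz11.IsDiag) (hdHz11 : hatHz11.IsDiag)
    (hdJz21 : hatJz21.IsDiag) (hdHz21 : hatHz21.IsDiag)
    (hatJphi11 hatHphi11 hatJphi21 hatHphi21 : Matrix (Fin 2) (Fin 2) ℂ)
    (Jz11 Hz11 Jz21 Hz21 Jphi11 Hphi11 Jphi21 Hphi21 : Matrix (Fin 2) (Fin 2) ℂ)
    (eJz11 : Jz11 = hatJz11 * bB11) (eHz11 : Hz11 = hatHz11 * aB11)
    (eJz21 : Jz21 = hatJz21 * bB21) (eHz21 : Hz21 = hatHz21 * aB21)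
    (eJphi11 : Jphi11 = hatJphi11 * bB11) (eHphi11 : Hphi11 = hatHphi11 * aB11)
    (eJphi21 : Jphi21 = hatJphi21 * bB21) (eHphi21 : Hphi21 = hatHphi21 * aB21)
    (hJphi11U : IsUnit hatJphi11)
    (hatDB DB R21 hatR21 : Matrix (Fin 2) (Fin 2) ℂ)
    (ehatDB : hatDB = hatHz21 - hatJz11 * hatJphi11⁻¹ * hatHphi21)
    (hDBU : IsUnit hatDB)
    (eDB : DB = Hz21 - Jz11 * Jphi11⁻¹ * Hphi21)
    (eR21 : R21 = DB⁻¹ * (Jz11 * Jphi11⁻¹ * Jphi21 - Jz21))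
    (ehatR21 : hatR21 = hatDB⁻¹ * (hatJz11 * hatJphi11⁻¹ * hatJphi21 - hatJz21)) :
    IsUnit DB ∧ R21 = bB21 * hatR21 * bB21 :=
  R21_factorization_general aB11 bB11 aB21 bB21 hab11 hab21 hatJz11 hatJz21 hatHz21 hatJphi11
    hatJphi21 hatHphi21 Jz11 Jz21 Hz21 Jphi11 Jphi21 Hphi21 eJz11 eJz21 eHz21 eJphi11 eJphi21
    eHphi21 hatDB DB R21 hatR21 ehatDB hDBU eDB eR21 ehatR21
end

section
/- Range-conditioned local transmission coefficient T21: under the two-layer range-conditioning hypotheses, assume Ĥφ21 is invertible and D̂_A := Ĵ_z11 − Ĥ_z21·Ĥφ21⁻¹·Ĵφ11 is invertible, and set D_A := J_z11 − H_z21·Hφ21⁻¹·Jφ11. Then T21 := D_A⁻¹ · (J_z21 − H_z21·Hφ21⁻¹·Jφ21) satisfies T21 = ā11 · T̂21 · β̄21, where T̂21 := D̂_A⁻¹ · (Ĵ_z21 − Ĥ_z21·Ĥφ21⁻¹·Ĵφ21). -/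
open Matrix

/-- Range-conditioned local transmission coefficient `T21 = ā11 · T̂21 · β̄21`. -/
theorem T21_factorization
    (aB11 bB11 aB21 bB21 : Matrix (Fin 2) (Fin 2) ℂ)
    (haB11 : aB11.IsDiag) (hbB11 : bB11.IsDiag) (haB21 : aB21.IsDiag) (hbB21 : bB21.IsDiag)
    (hab11 : aB11 * bB11 = 1) (hab21 : aB21 * bB21 = 1)
    (hatJz11 hatHz11 hatJz21 hatHz21 : Matrix (Fin 2) (Fin 2) ℂ)
    (hdJz11 : hatJz11.IsDiag) (hdHz11 : hatHz11.IsDiag)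
    (hdJz21 : hatJz21.IsDiag) (hdHz21 : hatHz21.IsDiag)
    (hatJphi11 hatHphi11 hatJphi21 hatHphi21 : Matrix (Fin 2) (Fin 2) ℂ)
    (Jz11 Hz11 Jz21 Hz21 Jphi11 Hphi11 Jphi21 Hphi21 : Matrix (Fin 2) (Fin 2) ℂ)
    (eJz11 : Jz11 = hatJz11 * bB11) (eHz11 : Hz11 = hatHz11 * aB11)
    (eJz21 : Jz21 = hatJz21 * bB21) (eHz21 : Hz21 = hatHz21 * aB21)
    (eJphi11 : Jphi11 = hatJphi11 * bB11) (eHphi11 : Hphi11 = hatHphi11 * aB11)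
    (eJphi21 : Jphi21 = hatJphi21 * bB21) (eHphi21 : Hphi21 = hatHphi21 * aB21)
    (hHphi21U : IsUnit hatHphi21)
    (hatDA DA T21 hatT21 : Matrix (Fin 2) (Fin 2) ℂ)
    (ehatDA : hatDA = hatJz11 - hatHz21 * hatHphi21⁻¹ * hatJphi11)
    (hDAU : IsUnit hatDA)
    (eDA : DA = Jz11 - Hz21 * Hphi21⁻¹ * Jphi11)
    (eT21 : T21 = DA⁻¹ * (Jz21 - Hz21 * Hphi21⁻¹ * Jphi21))
    (ehatT21 : hatT21 = hatDA⁻¹ * (hatJz21 - hatHz21 * hatHphi21⁻¹ * hatJphi21)) :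
    T21 = aB11 * hatT21 * bB21 := by
  have ha21 : aB21⁻¹ = bB21 := inv_eq_right_inv hab21
  have hb11 : bB11⁻¹ = aB11 := inv_eq_left_inv hab11
  have hHzH : Hz21 * Hphi21⁻¹ = hatHz21 * hatHphi21⁻¹ := by
    rw [eHz21, eHphi21, Matrix.mul_inv_rev, ha21, mul_assoc, ← mul_assoc aB21,
      hab21, one_mul]
  have hDA : DA = hatDA * bB11 := by
    rw [eDA, eJz11, eJphi11, hHzH, ehatDA]; noncomm_ring
  have hDAinv : DA⁻¹ = aB11 * hatDA⁻¹ := by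
    rw [hDA, Matrix.mul_inv_rev, hb11]
  rw [eT21, hDAinv, eJz21, eJphi21, hHzH, ehatT21]
  rw [← mul_assoc (hatHz21 * hatHphi21⁻¹), ← sub_mul]
  noncomm_ring
end

section
/- Range-conditioned generalized reflection coefficient for the outgoing-wave case (three layers): under the three-layer range-conditioning hypotheses, assume I − R̂21·(β̄21·ā22)·R̂23·(β̄21·ā22) is invertible. Then I − R21·R23 is invertible and R̃12 := R12 + T21·R23·(I − R21·R23)⁻¹·T12 satisfies R̃12 = ā11 · [ R̂12 + T̂21·(β̄21·ā22)·R̂23·(β̄21·ā22)·(I − R̂21·(β̄21·ā22)·R̂23·(β̄21·ā22))⁻¹·T̂12 ] · ā11. -/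
open Matrix

lemma diag_mul_comm (A B : Matrix (Fin 2) (Fin 2) ℂ) (hA : A.IsDiag) (hB : B.IsDiag) :
    A * B = B * A := by
  ext i j
  simp only [mul_apply, Fin.sum_univ_two]
  fin_cases i <;> fin_cases j <;>
    simp [hA (show (0 : Fin 2) ≠ 1 by decide), hA (show (1 : Fin 2) ≠ 0 by decide),
      hB (show (0 : Fin 2) ≠ 1 by decide), hB (show (1 : Fin 2) ≠ 0 by decide), mul_comm]

/-- Range-conditioned generalized reflection coefficient for the outgoing-wave case
(three layers): `R̃12 = ā11 · R̂̃12 · ā11`. -/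
theorem genR12_factorization
    (aB11 bB21 aB22 : Matrix (Fin 2) (Fin 2) ℂ)
    (haB11 : aB11.IsDiag) (hbB21 : bB21.IsDiag) (haB22 : aB22.IsDiag)
    (haB11U : IsUnit aB11) (hbB21U : IsUnit bB21) (haB22U : IsUnit aB22)
    (hatR12 hatR21 hatR23 hatT12 hatT21 : Matrix (Fin 2) (Fin 2) ℂ)
    (R12 R21 R23 T12 T21 : Matrix (Fin 2) (Fin 2) ℂ)
    (eR12 : R12 = aB11 * hatR12 * aB11)
    (eR21 : R21 = bB21 * hatR21 * bB21)
    (eR23 : R23 = aB22 * hatR23 * aB22)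
    (eT12 : T12 = bB21 * hatT12 * aB11)
    (eT21 : T21 = aB11 * hatT21 * bB21)
    (hinv : IsUnit (1 - hatR21 * (bB21 * aB22) * hatR23 * (bB21 * aB22)))
    (Rt12 : Matrix (Fin 2) (Fin 2) ℂ)
    (eRt12 : Rt12 = R12 + T21 * R23 * (1 - R21 * R23)⁻¹ * T12) :
    IsUnit (1 - R21 * R23) ∧
      Rt12 = aB11 *
        (hatR12 + hatT21 * (bB21 * aB22) * hatR23 * (bB21 * aB22) *
          (1 - hatR21 * (bB21 * aB22) * hatR23 * (bB21 * aB22))⁻¹ * hatT12) * aB11 := by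
  set M : Matrix (Fin 2) (Fin 2) ℂ :=
    1 - hatR21 * (bB21 * aB22) * hatR23 * (bB21 * aB22) with hM
  have hbd : IsUnit bB21.det := (Matrix.isUnit_iff_isUnit_det _).mp hbB21U
  have hb1 : bB21 * bB21⁻¹ = 1 := Matrix.mul_nonsing_inv _ hbd
  have hb2 : bB21⁻¹ * bB21 = 1 := Matrix.nonsing_inv_mul _ hbd
  have hcomm : aB22 * bB21 = bB21 * aB22 := diag_mul_comm _ _ haB22 hbB21
  have hca : ∀ X : Matrix (Fin 2) (Fin 2) ℂ, aB22 * (bB21 * X) = bB21 * (aB22 * X) := by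
    intro X; rw [← mul_assoc, hcomm, mul_assoc]
  have hbc : ∀ X : Matrix (Fin 2) (Fin 2) ℂ, bB21 * (bB21⁻¹ * X) = X := by
    intro X; rw [← mul_assoc, hb1, one_mul]
  have hcb : ∀ X : Matrix (Fin 2) (Fin 2) ℂ, bB21⁻¹ * (bB21 * X) = X := by
    intro X; rw [← mul_assoc, hb2, one_mul]
  have htail : aB22 * bB21⁻¹ = bB21⁻¹ * aB22 := by
    have h := congrArg (fun X => bB21⁻¹ * X * bB21⁻¹) hcomm
    simp only [mul_assoc] at h
    simpa only [hb1, mul_one, hcb] using h.symm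
  have hct : ∀ X : Matrix (Fin 2) (Fin 2) ℂ, aB22 * (bB21⁻¹ * X) = bB21⁻¹ * (aB22 * X) := by
    intro X; rw [← mul_assoc, htail, mul_assoc]
  have hfact : 1 - R21 * R23 = bB21 * M * bB21⁻¹ := by
    rw [eR21, eR23, hM, mul_sub, sub_mul, mul_one, hb1]
    congr 1
    simp only [mul_assoc, hca, hct, htail, hbc, hcb, hb1, hb2, mul_one]
  have hunit : IsUnit (1 - R21 * R23) := by
    rw [hfact]
    exact (hbB21U.mul hinv).mul (Matrix.isUnit_nonsing_inv_iff.mpr hbB21U)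
  refine ⟨hunit, ?_⟩
  have hMd : IsUnit M.det := (Matrix.isUnit_iff_isUnit_det _).mp hinv
  have hinv_eq : (1 - R21 * R23)⁻¹ = bB21 * M⁻¹ * bB21⁻¹ := by
    rw [hfact, Matrix.mul_inv_rev, Matrix.mul_inv_rev,
      Matrix.nonsing_inv_nonsing_inv _ hbd, ← mul_assoc]
  rw [eRt12, hinv_eq, eR12, eT21, eR23, eT12, mul_add, add_mul]
  congr 1
  simp only [mul_assoc, hca, hct, htail, hbc, hcb, hb1, hb2, mul_one]
end

section
/- Range-conditioned generalized reflection coefficient for the standing-wave case (three layers): under the standing-wave three-layer range-conditioning hypotheses, assume I − R̂23·(β̄21·ā22)·R̂21·(β̄21·ā22) is invertible. Then I − R23·R21 is invertible and R̃32 := R32 + T23·R21·(I − R23·R21)⁻¹·T32 satisfies R̃32 = β̄32 · [ R̂32 + T̂23·(β̄21·ā22)·R̂21·(β̄21·ā22)·(I − R̂23·(β̄21·ā22)·R̂21·(β̄21·ā22))⁻¹·T̂32 ] · β̄32. -/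
/-!
Because `ā22` commutes with the diagonal `β̄21`, the multiple-reflection operator
`I - R23 R21` is the conjugate `ā22 (I - R̂23 (β̄21 ā22) R̂21 (β̄21 ā22)) ā22⁻¹`. Conjugation
preserves invertibility and commutes with inversion, and in `T23 R21 (I - R23 R21)⁻¹ T32` the outer
`ā22⁻¹` cancels against the factor `ā22` of `T32`, leaving only the `β̄32` on both sides.
-/

open Matrix

namespace Matrix

variable {n R : Type*} [Fintype n] [DecidableEq n] [CommRing R]

theorem IsDiag.commute {A B : Matrix n n R} (hA : A.IsDiag) (hB : B.IsDiag) : Commute A B := by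
  rw [← hA.diagonal_diag, ← hB.diagonal_diag]
  exact commute_diagonal _ _

theorem isUnit_conj_iff {M : Matrix n n R} (hM : IsUnit M) (N : Matrix n n R) :
    IsUnit (M * N * M⁻¹) ↔ IsUnit N := by
  simp only [isUnit_iff_isUnit_det, det_conj hM]

theorem conj_nonsing_inv {M : Matrix n n R} (hM : IsUnit M) (N : Matrix n n R) :
    (M * N * M⁻¹)⁻¹ = M * N⁻¹ * M⁻¹ := by
  rw [mul_inv_rev, mul_inv_rev, nonsing_inv_nonsing_inv _ ((isUnit_iff_isUnit_det M).mp hM),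
    mul_assoc]

theorem one_sub_sandwich_mul_sandwich {a b : Matrix n n R} (hab : Commute a b) (ha : IsUnit a)
    (X Y : Matrix n n R) :
    1 - a * X * a * (b * Y * b) = a * (1 - X * (b * a) * Y * (b * a)) * a⁻¹ := by
  have ha' : a * a⁻¹ = 1 := mul_nonsing_inv a ((isUnit_iff_isUnit_det a).mp ha)
  rw [mul_sub, sub_mul, mul_one, ha']
  simp only [mul_assoc, ha', mul_one, hab.left_comm]

end Matrix

theorem genR32_factorization_general
    (bB21 aB22 bB32 : Matrix (Fin 2) (Fin 2) ℂ)
    (hbB21 : bB21.IsDiag) (haB22 : aB22.IsDiag)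
    (haB22U : IsUnit aB22)
    (hatR32 hatR21 hatR23 hatT32 hatT23 : Matrix (Fin 2) (Fin 2) ℂ)
    (R32 R21 R23 T32 T23 : Matrix (Fin 2) (Fin 2) ℂ)
    (eR32 : R32 = bB32 * hatR32 * bB32)
    (eR21 : R21 = bB21 * hatR21 * bB21)
    (eR23 : R23 = aB22 * hatR23 * aB22)
    (eT32 : T32 = aB22 * hatT32 * bB32)
    (eT23 : T23 = bB32 * hatT23 * aB22)
    (hinv : IsUnit (1 - hatR23 * (bB21 * aB22) * hatR21 * (bB21 * aB22)))
    (Rt32 : Matrix (Fin 2) (Fin 2) ℂ)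
    (eRt32 : Rt32 = R32 + T23 * R21 * (1 - R23 * R21)⁻¹ * T32) :
    IsUnit (1 - R23 * R21) ∧
      Rt32 = bB32 *
        (hatR32 + hatT23 * (bB21 * aB22) * hatR21 * (bB21 * aB22) *
          (1 - hatR23 * (bB21 * aB22) * hatR21 * (bB21 * aB22))⁻¹ * hatT32) * bB32 := by
  subst eR32 eR21 eR23 eT32 eT23 eRt32
  have hab : Commute aB22 bB21 := haB22.commute hbB21
  have hloop := one_sub_sandwich_mul_sandwich hab haB22U hatR23 hatR21
  have ha := (isUnit_iff_isUnit_det aB22).mp haB22U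
  refine ⟨hloop ▸ (isUnit_conj_iff haB22U _).mpr hinv, ?_⟩
  rw [hloop, conj_nonsing_inv haB22U]
  simp only [mul_add, add_mul, mul_assoc, nonsing_inv_mul_cancel_left aB22 _ ha, hab.left_comm]

/-- Range-conditioned generalized reflection coefficient for the standing-wave case
(three layers): `R̃32 = β̄32 · R̂̃32 · β̄32`. -/
theorem genR32_factorization
    (bB21 aB22 bB32 : Matrix (Fin 2) (Fin 2) ℂ)
    (hbB21 : bB21.IsDiag) (haB22 : aB22.IsDiag) (hbB32 : bB32.IsDiag)
    (hbB21U : IsUnit bB21) (haB22U : IsUnit aB22) (hbB32U : IsUnit bB32)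
    (hatR32 hatR21 hatR23 hatT32 hatT23 : Matrix (Fin 2) (Fin 2) ℂ)
    (R32 R21 R23 T32 T23 : Matrix (Fin 2) (Fin 2) ℂ)
    (eR32 : R32 = bB32 * hatR32 * bB32)
    (eR21 : R21 = bB21 * hatR21 * bB21)
    (eR23 : R23 = aB22 * hatR23 * aB22)
    (eT32 : T32 = aB22 * hatT32 * bB32)
    (eT23 : T23 = bB32 * hatT23 * aB22)
    (hinv : IsUnit (1 - hatR23 * (bB21 * aB22) * hatR21 * (bB21 * aB22)))
    (Rt32 : Matrix (Fin 2) (Fin 2) ℂ)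
    (eRt32 : Rt32 = R32 + T23 * R21 * (1 - R23 * R21)⁻¹ * T32) :
    IsUnit (1 - R23 * R21) ∧
      Rt32 = bB32 *
        (hatR32 + hatT23 * (bB21 * aB22) * hatR21 * (bB21 * aB22) *
          (1 - hatR23 * (bB21 * aB22) * hatR21 * (bB21 * aB22))⁻¹ * hatT32) * bB32 :=
  genR32_factorization_general bB21 aB22 bB32 hbB21 haB22 haB22U hatR32 hatR21 hatR23 hatT32 hatT23
    R32 R21 R23 T32 T23 eR32 eR21 eR23 eT32 eT23 hinv Rt32 eRt32
end

section
/- Range-conditioned S-coefficient for the outgoing-wave case (three layers): under the three-layer range-conditioning hypotheses, assume I − R̂21·(β̄21·ā22)·R̂23·(β̄21·ā22) is invertible. Then I − R21·R23 is invertible and S12 := (I − R21·R23)⁻¹·T12 satisfies S12 = β̄21 · Ŝ12 · ā11, where Ŝ12 := (I − R̂21·(β̄21·ā22)·R̂23·(β̄21·ā22))⁻¹·T̂12. -/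
open Matrix

lemma isDiag_comm {A B : Matrix (Fin 2) (Fin 2) ℂ} (hA : A.IsDiag) (hB : B.IsDiag) :
    A * B = B * A := by
  rw [← hA.diagonal_diag, ← hB.diagonal_diag, diagonal_mul_diagonal,
    diagonal_mul_diagonal]
  exact congrArg diagonal (funext fun i => mul_comm (A.diag i) (B.diag i))

/-- Range-conditioned S-coefficient for the outgoing-wave case (three layers):
`S12 = β̄21 · Ŝ12 · ā11`. -/
theorem S12_factorization
    (aB11 bB21 aB22 : Matrix (Fin 2) (Fin 2) ℂ)
    (haB11 : aB11.IsDiag) (hbB21 : bB21.IsDiag) (haB22 : aB22.IsDiag)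
    (haB11U : IsUnit aB11) (hbB21U : IsUnit bB21) (haB22U : IsUnit aB22)
    (hatR12 hatR21 hatR23 hatT12 hatT21 : Matrix (Fin 2) (Fin 2) ℂ)
    (R12 R21 R23 T12 T21 : Matrix (Fin 2) (Fin 2) ℂ)
    (eR12 : R12 = aB11 * hatR12 * aB11)
    (eR21 : R21 = bB21 * hatR21 * bB21)
    (eR23 : R23 = aB22 * hatR23 * aB22)
    (eT12 : T12 = bB21 * hatT12 * aB11)
    (eT21 : T21 = aB11 * hatT21 * bB21)
    (hinv : IsUnit (1 - hatR21 * (bB21 * aB22) * hatR23 * (bB21 * aB22)))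
    (S12 hatS12 : Matrix (Fin 2) (Fin 2) ℂ)
    (eS12 : S12 = (1 - R21 * R23)⁻¹ * T12)
    (ehatS12 : hatS12 = (1 - hatR21 * (bB21 * aB22) * hatR23 * (bB21 * aB22))⁻¹ * hatT12) :
    IsUnit (1 - R21 * R23) ∧ S12 = bB21 * hatS12 * aB11 := by
  set M := 1 - hatR21 * (bB21 * aB22) * hatR23 * (bB21 * aB22) with hM
  have hbd : IsUnit bB21.det := (Matrix.isUnit_iff_isUnit_det _).mp hbB21U
  have hb : bB21 * bB21⁻¹ = 1 := mul_nonsing_inv _ hbd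
  have hb' : bB21⁻¹ * bB21 = 1 := nonsing_inv_mul _ hbd
  have hc0 : aB22 * bB21 = bB21 * aB22 := isDiag_comm haB22 hbB21
  have hcomm : aB22 * bB21⁻¹ = bB21⁻¹ * aB22 := by
    calc aB22 * bB21⁻¹ = bB21⁻¹ * bB21 * aB22 * bB21⁻¹ := by rw [hb', one_mul]
      _ = bB21⁻¹ * (aB22 * bB21) * bB21⁻¹ := by rw [hc0]; noncomm_ring
      _ = bB21⁻¹ * aB22 * (bB21 * bB21⁻¹) := by noncomm_ring
      _ = bB21⁻¹ * aB22 := by rw [hb, mul_one]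
  have key : 1 - R21 * R23 = bB21 * M * bB21⁻¹ := by
    rw [hM, eR21, eR23]
    have h1 : bB21 * (1 - hatR21 * (bB21 * aB22) * hatR23 * (bB21 * aB22)) * bB21⁻¹
        = bB21 * bB21⁻¹ - bB21 * (hatR21 * (bB21 * aB22) * hatR23 * (bB21 * aB22)) * bB21⁻¹ := by
      noncomm_ring
    rw [h1, hb]
    congr 1
    symm
    calc bB21 * (hatR21 * (bB21 * aB22) * hatR23 * (bB21 * aB22)) * bB21⁻¹
        = bB21 * hatR21 * bB21 * (aB22 * hatR23 * bB21 * (aB22 * bB21⁻¹)) := by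
          noncomm_ring
      _ = bB21 * hatR21 * bB21 * (aB22 * hatR23 * (bB21 * bB21⁻¹) * aB22) := by
          rw [hcomm]; noncomm_ring
      _ = bB21 * hatR21 * bB21 * (aB22 * hatR23 * aB22) := by rw [hb, mul_one]
  have hU : IsUnit (1 - R21 * R23) := by
    rw [key]
    exact (hbB21U.mul hinv).mul (isUnit_nonsing_inv_iff.mpr hbB21U)
  refine ⟨hU, ?_⟩
  have hinvcalc : (1 - R21 * R23)⁻¹ = bB21 * M⁻¹ * bB21⁻¹ := by
    rw [key, Matrix.mul_inv_rev, Matrix.mul_inv_rev, nonsing_inv_nonsing_inv _ hbd]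
    noncomm_ring
  rw [eS12, hinvcalc, eT12, ehatS12]
  calc bB21 * M⁻¹ * bB21⁻¹ * (bB21 * hatT12 * aB11)
      = bB21 * M⁻¹ * (bB21⁻¹ * bB21) * hatT12 * aB11 := by noncomm_ring
    _ = bB21 * (M⁻¹ * hatT12) * aB11 := by rw [hb']; noncomm_ring
end

section
/- Range-conditioned S-coefficient for the standing-wave case (three layers): under the standing-wave three-layer range-conditioning hypotheses, assume I − R̂23·(β̄21·ā22)·R̂21·(β̄21·ā22) is invertible. Then I − R23·R21 is invertible and S32 := (I − R23·R21)⁻¹·T32 satisfies S32 = ā22 · Ŝ32 · β̄32, where Ŝ32 := (I − R̂23·(β̄21·ā22)·R̂21·(β̄21·ā22))⁻¹·T̂32. -/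
open Matrix

lemma diag_comm {n : Type*} [Fintype n] [DecidableEq n] (A B : Matrix n n ℂ)
    (hA : A.IsDiag) (hB : B.IsDiag) : A * B = B * A := by
  rw [← hA.diagonal_diag, ← hB.diagonal_diag, diagonal_mul_diagonal,
    diagonal_mul_diagonal]
  exact congrArg diagonal (funext fun i => mul_comm _ _)

/-- Range-conditioned S-coefficient for the standing-wave case (three layers):
`S32 = ā22 · Ŝ32 · β̄32`. -/
theorem S32_factorization
    (bB21 aB22 bB32 : Matrix (Fin 2) (Fin 2) ℂ)
    (hbB21 : bB21.IsDiag) (haB22 : aB22.IsDiag) (hbB32 : bB32.IsDiag)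
    (hbB21U : IsUnit bB21) (haB22U : IsUnit aB22) (hbB32U : IsUnit bB32)
    (hatR32 hatR21 hatR23 hatT32 hatT23 : Matrix (Fin 2) (Fin 2) ℂ)
    (R32 R21 R23 T32 T23 : Matrix (Fin 2) (Fin 2) ℂ)
    (eR32 : R32 = bB32 * hatR32 * bB32)
    (eR21 : R21 = bB21 * hatR21 * bB21)
    (eR23 : R23 = aB22 * hatR23 * aB22)
    (eT32 : T32 = aB22 * hatT32 * bB32)
    (eT23 : T23 = bB32 * hatT23 * aB22)
    (hinv : IsUnit (1 - hatR23 * (bB21 * aB22) * hatR21 * (bB21 * aB22)))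
    (S32 hatS32 : Matrix (Fin 2) (Fin 2) ℂ)
    (eS32 : S32 = (1 - R23 * R21)⁻¹ * T32)
    (ehatS32 : hatS32 = (1 - hatR23 * (bB21 * aB22) * hatR21 * (bB21 * aB22))⁻¹ * hatT32) :
    IsUnit (1 - R23 * R21) ∧ S32 = aB22 * hatS32 * bB32 := by
  have hdet : IsUnit aB22.det := (isUnit_iff_isUnit_det _).1 haB22U
  have hcomm : aB22 * bB21 = bB21 * aB22 := diag_comm _ _ haB22 hbB21
  set M := 1 - hatR23 * (bB21 * aB22) * hatR21 * (bB21 * aB22) with hM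
  have key : R23 * R21 = aB22 * (hatR23 * (bB21 * aB22) * hatR21 * (bB21 * aB22)) * aB22⁻¹ := by
    subst eR23 eR21
    simp only [Matrix.mul_assoc]
    rw [Matrix.mul_nonsing_inv aB22 hdet, Matrix.mul_one,
      ← Matrix.mul_assoc aB22 bB21, hcomm, Matrix.mul_assoc]
  have hfac : 1 - R23 * R21 = aB22 * M * aB22⁻¹ := by
    rw [hM, Matrix.mul_sub, Matrix.sub_mul, Matrix.mul_one,
      Matrix.mul_nonsing_inv aB22 hdet, key]
  have hU : IsUnit (1 - R23 * R21) := by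
    rw [hfac]
    exact (haB22U.mul hinv).mul (isUnit_nonsing_inv_iff.2 haB22U)
  refine ⟨hU, ?_⟩
  rw [eS32, ehatS32, hfac, Matrix.mul_inv_rev, Matrix.mul_inv_rev,
    Matrix.nonsing_inv_nonsing_inv aB22 hdet, eT32]
  simp only [Matrix.mul_assoc]
  rw [← Matrix.mul_assoc aB22⁻¹ aB22, Matrix.nonsing_inv_mul aB22 hdet, Matrix.one_mul]
end

section
/- Range-conditioned generalized transmission coefficient for the standing-wave case: let i < j be layer indices. Under the multilayer standing-wave range-conditioning hypotheses, the generalized transmission coefficient T̃ji := T_{i+1,i} · S_{i+2,i+1} · ⋯ · S_{j,j−1} satisfies T̃ji = ā_{ii} · T̂̃ji · β̄_{j,j−1}, where T̂̃ji := T̂_{i+1,i} · ∏_{k=i+1}^{j−1} ( β̄_{k,k−1}·ā_{kk} · Ŝ_{k+1,k} ), the product being taken in increasing order of k (the factor for k = i+1 leftmost and the factor for k = j−1 rightmost); for j = i+1 the product is the identity matrix and T̃ji = T_{i+1,i}. -/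
open Matrix

private lemma genT_standing_aux (i : ℕ)
    (aB bB : ℕ → Matrix (Fin 2) (Fin 2) ℂ)
    (hatT : Matrix (Fin 2) (Fin 2) ℂ) (hatS : ℕ → Matrix (Fin 2) (Fin 2) ℂ)
    (T : Matrix (Fin 2) (Fin 2) ℂ) (S : ℕ → Matrix (Fin 2) (Fin 2) ℂ)
    (eT : T = aB i * hatT * bB (i + 1))
    (eS : ∀ k, S k = aB k * hatS k * bB (k + 1)) : ∀ n : ℕ,
    T * ((List.range n).map (fun m => S (i + 1 + m))).prod =
      aB i * (hatT * ((List.range n).map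
        (fun m => bB (i + 1 + m) * aB (i + 1 + m) * hatS (i + 1 + m))).prod)
        * bB (i + 1 + n) := by
  intro n
  induction n with
  | zero => simpa using eT
  | succ n ih =>
    rw [List.range_succ, List.map_append, List.prod_append, List.map_append,
      List.prod_append]
    simp only [List.map_cons, List.map_nil, List.prod_cons, List.prod_nil, mul_one]
    rw [← mul_assoc, ih, eS (i + 1 + n)]
    have : i + 1 + n + 1 = i + 1 + (n + 1) := by omega
    rw [this]
    simp only [mul_assoc]

/-- Range-conditioned generalized transmission coefficient, standing-wave case (`i < j`):
`T̃ji = T_{i+1,i}·S_{i+2,i+1}⋯S_{j,j−1} = ā_{ii} · T̂̃ji · β̄_{j,j−1}`, where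
`T̂̃ji = T̂_{i+1,i} · ∏_{k=i+1}^{j−1} (β̄_{k,k−1}·ā_{kk}·Ŝ_{k+1,k})` in increasing
order of `k` (factor `k = i+1` leftmost, factor `k = j−1` rightmost); for `j = i+1`
the product is the identity and `T̃ji = T_{i+1,i}`.
Here `aB k = ā_{kk}`, `bB k = β̄_{k,k−1}`, `hatS k = Ŝ_{k+1,k}`, `S k = S_{k+1,k}`,
`hatT = T̂_{i+1,i}`, `T = T_{i+1,i}`. -/
theorem genT_standing_factorization (i j : ℕ) (hij : i < j)
    (aB bB : ℕ → Matrix (Fin 2) (Fin 2) ℂ)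
    (haD : ∀ k, (aB k).IsDiag) (hbD : ∀ k, (bB k).IsDiag)
    (haU : ∀ k, IsUnit (aB k)) (hbU : ∀ k, IsUnit (bB k))
    (hatT : Matrix (Fin 2) (Fin 2) ℂ) (hatS : ℕ → Matrix (Fin 2) (Fin 2) ℂ)
    (T : Matrix (Fin 2) (Fin 2) ℂ) (S : ℕ → Matrix (Fin 2) (Fin 2) ℂ)
    (eT : T = aB i * hatT * bB (i + 1))
    (eS : ∀ k, S k = aB k * hatS k * bB (k + 1))
    (Ttilde hatTtilde : Matrix (Fin 2) (Fin 2) ℂ)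
    (eTtilde : Ttilde = T * ((List.range (j - 1 - i)).map (fun m => S (i + 1 + m))).prod)
    (ehatTtilde : hatTtilde =
      hatT * ((List.range (j - 1 - i)).map
        (fun m => bB (i + 1 + m) * aB (i + 1 + m) * hatS (i + 1 + m))).prod) :
    Ttilde = aB i * hatTtilde * bB j ∧ (j = i + 1 → Ttilde = T) := by
  have key := genT_standing_aux i aB bB hatT hatS T S eT eS (j - 1 - i)
  have hj : i + 1 + (j - 1 - i) = j := by omega
  constructor
  · rw [eTtilde, key, hj, ehatTtilde]
  · intro h
    subst h
    simp [eTtilde]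
end
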